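/- Let L > 0, let r ∈ ℝ³ be a constant vector, and let m : [0,L] → ℝ³ be twice continuously differentiable with m'(0) = m'(L) = 0. Then ∫₀ᴸ (m(x) − r) · (m(x) × m''(x)) dx = 0. (The paper's Lemma 3.5.) -/

import Mathlib

open RealInnerProductSpace

/-- Cross product on `ℝ³ = EuclideanSpace ℝ (Fin 3)`. -/
noncomputable def cross3 (u v : EuclideanSpace ℝ (Fin 3)) : EuclideanSpace ℝ (Fin 3) :=
  (WithLp.equiv 2 (Fin 3 → ℝ)).symm
    ![u 1 * v 2 - u 2 * v 1, u 2 * v 0 - u 0 * v 2, u 0 * v 1 - u 1 * v 0]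

/-! The integrand `(m - r) · (m × m'')` is the derivative of `(m - r) · (m × m')`: the other two
terms of the product rule, `m' · (m × m')` and `(m - r) · (m' × m')`, vanish. Integrating, the
integral is the difference of the boundary values of `(m - r) · (m × m')`, both zero as `m' = 0` there. -/

open Matrix

lemma cross3_eq_toLp_crossProduct (u v : EuclideanSpace ℝ (Fin 3)) :
    cross3 u v = WithLp.toLp 2 (u.ofLp ⨯₃ v.ofLp) := by
  rw [cross_apply]; rfl

lemma cross3_self (v : EuclideanSpace ℝ (Fin 3)) : cross3 v v = 0 := by
  simp [cross3_eq_toLp_crossProduct, cross_self]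

lemma inner_cross3_self (u v : EuclideanSpace ℝ (Fin 3)) : ⟪v, cross3 u v⟫ = 0 := by
  rw [cross3_eq_toLp_crossProduct, EuclideanSpace.inner_eq_star_dotProduct]
  simp [dotProduct_comm, dot_cross_self]

lemma isBilinearMap_cross3 : IsBilinearMap ℝ cross3 where
  add_left _ _ _ := by simp [cross3_eq_toLp_crossProduct]
  smul_left _ _ _ := by simp [cross3_eq_toLp_crossProduct]
  add_right _ _ _ := by simp [cross3_eq_toLp_crossProduct]
  smul_right _ _ _ := by simp [cross3_eq_toLp_crossProduct]

lemma cross3_zero_right (u : EuclideanSpace ℝ (Fin 3)) : cross3 u 0 = 0 :=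
  by simp [cross3_eq_toLp_crossProduct]

theorem Continuous.cross3 {X : Type*} [TopologicalSpace X] {u v : X → EuclideanSpace ℝ (Fin 3)}
    (hu : Continuous u) (hv : Continuous v) : Continuous fun x => cross3 (u x) (v x) :=
  isBilinearMap_cross3.toContinuousBilinearMap.continuous₂.comp₂ hu hv

theorem HasDerivAt.cross3 {u v : ℝ → EuclideanSpace ℝ (Fin 3)} {u' v' : EuclideanSpace ℝ (Fin 3)}
    {x : ℝ} (hu : HasDerivAt u u' x) (hv : HasDerivAt v v' x) :
    HasDerivAt (fun t => cross3 (u t) (v t)) (cross3 (u x) v' + cross3 u' (v x)) x :=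
  isBilinearMap_cross3.toContinuousBilinearMap.hasDerivAt_of_bilinear (fun _ => hu) fun _ => hv

theorem hasDerivAt_inner_sub_cross3 (r : EuclideanSpace ℝ (Fin 3))
    {m m' : ℝ → EuclideanSpace ℝ (Fin 3)} {m'' : EuclideanSpace ℝ (Fin 3)} {x : ℝ}
    (hm : HasDerivAt m (m' x) x) (hm' : HasDerivAt m' m'' x) :
    HasDerivAt (fun t => ⟪m t - r, cross3 (m t) (m' t)⟫) ⟪m x - r, cross3 (m x) m''⟫ x := by
  simpa [cross3_self, inner_cross3_self] using (hm.sub_const r).inner ℝ (hm.cross3 hm')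

theorem integral_inner_sub_cross3_deriv_deriv (r : EuclideanSpace ℝ (Fin 3))
    {m : ℝ → EuclideanSpace ℝ (Fin 3)} (hm : ContDiff ℝ 2 m) (a b : ℝ) :
    ∫ x in a..b, ⟪m x - r, cross3 (m x) (deriv (deriv m) x)⟫ =
      ⟪m b - r, cross3 (m b) (deriv m b)⟫ - ⟪m a - r, cross3 (m a) (deriv m a)⟫ := by
  obtain ⟨hm_diff, -, hm'⟩ := contDiff_succ_iff_deriv (n := 1).mp hm
  obtain ⟨hm'_diff, -, hm''⟩ := contDiff_succ_iff_deriv (n := 0).mp hm'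
  refine intervalIntegral.integral_eq_sub_of_hasDerivAt
    (fun x _ => hasDerivAt_inner_sub_cross3 r (hm_diff x).hasDerivAt (hm'_diff x).hasDerivAt) ?_
  exact ((hm.continuous.sub continuous_const).inner
    (hm.continuous.cross3 hm''.continuous)).intervalIntegrable a b

theorem integral_shifted_dot_cross_second_deriv_eq_zero
    (L : ℝ) (r : EuclideanSpace ℝ (Fin 3))
    (m : ℝ → EuclideanSpace ℝ (Fin 3)) (hm : ContDiff ℝ 2 m)
    (hb0 : deriv m 0 = 0) (hbL : deriv m L = 0) :
    ∫ x in (0 : ℝ)..L, ⟪m x - r, cross3 (m x) (deriv (deriv m) x)⟫ = 0 := by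
  simp only [integral_inner_sub_cross3_deriv_deriv r hm, hb0, hbL, cross3_zero_right,
    inner_zero_right, sub_self]
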